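/- arXiv:2112.09495 — 8 statements merged into one kernel-verified Lean document; each statement's English description precedes it below -/
import Mathlib

section
/- Let (Ω, F, P) be a probability space with filtration (F_i), T a stopping time with respect to (F_i), and (X_i) a nonnegative stochastic process adapted to (F_i) such that E[X_{i+1} | F_i] ≤ X_i − ε·𝟙_{T>i} pointwise for all i, where ε > 0. Then for every i ∈ ℕ, E[X_i] ≤ E[X_0] − ε · Σ_{j=0}^{i−1} P[T > j]. -/
open MeasureTheory Filter

/-!
Integrating the drift condition `E[X (i+1) | ℱ i] ≤ X i - ε 𝟙_{T > i}` gives, by the tower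
property, `E[X (i+1)] ≤ E[X i] - ε P[T > i]`; summing these one-step bounds telescopes.
-/

theorem le_sub_sum_range_of_le_sub {α : Type*} [AddCommGroup α] [PartialOrder α]
    [IsOrderedAddMonoid α] {a d : ℕ → α} (h : ∀ i, a (i + 1) ≤ a i - d i) (n : ℕ) :
    a n ≤ a 0 - ∑ i ∈ Finset.range n, d i := by
  induction n with
  | zero => simp
  | succ n ih =>
    calc a (n + 1) ≤ a n - d n := h n
      _ ≤ a 0 - ∑ i ∈ Finset.range n, d i - d n := sub_le_sub_right ih _
      _ = a 0 - ∑ i ∈ Finset.range (n + 1), d i := by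
        rw [Finset.sum_range_succ, sub_add_eq_sub_sub]

namespace MeasureTheory

variable {Ω : Type*} {m m0 : MeasurableSpace Ω} {μ : Measure Ω}

theorem integral_le_integral_sub_measureReal_of_condExp_le [IsFiniteMeasure μ] (hm : m ≤ m0)
    [SigmaFinite (μ.trim hm)] {Y Z : Ω → ℝ} (hZ : Integrable Z μ) {s : Set Ω}
    (hs : MeasurableSet s) (c : ℝ)
    (h : μ[Y | m] ≤ᵐ[μ] fun ω => Z ω - c * s.indicator (fun _ => 1) ω) :
    ∫ ω, Y ω ∂μ ≤ ∫ ω, Z ω ∂μ - c * μ.real s := by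
  have hind : Integrable (fun ω => c * s.indicator (fun _ => (1 : ℝ)) ω) μ :=
    ((integrable_const 1).indicator hs).const_mul c
  calc ∫ ω, Y ω ∂μ = ∫ ω, (μ[Y | m]) ω ∂μ := (integral_condExp hm).symm
    _ ≤ ∫ ω, (Z ω - c * s.indicator (fun _ => 1) ω) ∂μ :=
      integral_mono_ae integrable_condExp (hZ.sub hind) h
    _ = ∫ ω, Z ω ∂μ - c * μ.real s := by
      rw [integral_sub hZ hind, integral_const_mul, integral_indicator_const _ hs, smul_eq_mul,
        mul_one]

end MeasureTheory

theorem rsm_expectation_bound_general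
    {Ω : Type*} {m0 : MeasurableSpace Ω} {μ : Measure Ω} [IsProbabilityMeasure μ]
    (ℱ : Filtration ℕ m0) (X : ℕ → Ω → ℝ) (T : Ω → ℕ∞) (ε : ℝ)
    (hstop : ∀ i : ℕ, MeasurableSet[ℱ i] {ω | T ω ≤ (i : ℕ∞)})
    (hint : ∀ i, Integrable (X i) μ)
    (hdec : ∀ i : ℕ, ∀ ω : Ω,
      (μ[X (i + 1) | ℱ i]) ω ≤ X i ω - ε * Set.indicator {ω | (i : ℕ∞) < T ω} (fun _ => 1) ω) :
    ∀ i : ℕ, ∫ ω, X i ω ∂μ ≤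
      ∫ ω, X 0 ω ∂μ - ε * ∑ j ∈ Finset.range i, (μ {ω | (j : ℕ∞) < T ω}).toReal := by
  have hnotStopped : ∀ i : ℕ, MeasurableSet {ω | (i : ℕ∞) < T ω} := fun i => by
    simpa only [Set.compl_ofPred, not_le] using (ℱ.le i _ (hstop i)).compl
  intro n
  rw [Finset.mul_sum]
  exact le_sub_sum_range_of_le_sub (a := fun i => ∫ ω, X i ω ∂μ)
    (d := fun j => ε * μ.real {ω | (j : ℕ∞) < T ω}) (fun i =>
    integral_le_integral_sub_measureReal_of_condExp_le (ℱ.le i) (hint i) (hnotStopped i) ε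
      (ae_of_all μ (hdec i))) n

/-- For an ε-ranking supermartingale `X` with respect to a stopping time `T`
(valued in `ℕ∞`, possibly infinite), we have
`E[X i] ≤ E[X 0] - ε * ∑_{j=0}^{i-1} P[T > j]` for every `i`. -/
theorem rsm_expectation_bound
    {Ω : Type*} {m0 : MeasurableSpace Ω} {μ : Measure Ω} [IsProbabilityMeasure μ]
    (ℱ : Filtration ℕ m0) (X : ℕ → Ω → ℝ) (T : Ω → ℕ∞) (ε : ℝ) (hε : 0 < ε)
    (hstop : ∀ i : ℕ, MeasurableSet[ℱ i] {ω | T ω ≤ (i : ℕ∞)})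
    (hadapted : Adapted ℱ X)
    (hint : ∀ i, Integrable (X i) μ)
    (hnonneg : ∀ i ω, 0 ≤ X i ω)
    (hdec : ∀ i : ℕ, ∀ ω : Ω,
      (μ[X (i + 1) | ℱ i]) ω ≤ X i ω - ε * Set.indicator {ω | (i : ℕ∞) < T ω} (fun _ => 1) ω) :
    ∀ i : ℕ, ∫ ω, X i ω ∂μ ≤
      ∫ ω, X 0 ω ∂μ - ε * ∑ j ∈ Finset.range i, (μ {ω | (j : ℕ∞) < T ω}).toReal :=
  rsm_expectation_bound_general ℱ X T ε hstop hint hdec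
end

section
/- Let (X_i) be an ε-ranking supermartingale with ε > 0 with respect to a stopping time T, with E[X_0] < ∞. Then Σ_{j=0}^{∞} P[T > j] ≤ E[X_0]/ε. -/
open MeasureTheory Filter

/-- For an ε-RSM `X` (ε > 0) with respect to a stopping time `T`,
`∑_{j=0}^∞ P[T > j] ≤ E[X 0] / ε`. -/
theorem rsm_tail_sum_bound
    {Ω : Type*} {m0 : MeasurableSpace Ω} {μ : Measure Ω} [IsProbabilityMeasure μ]
    (ℱ : Filtration ℕ m0) (X : ℕ → Ω → ℝ) (T : Ω → ℕ∞) (ε : ℝ) (hε : 0 < ε)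
    (hstop : ∀ i : ℕ, MeasurableSet[ℱ i] {ω | T ω ≤ (i : ℕ∞)})
    (hadapted : Adapted ℱ X)
    (hint : ∀ i, Integrable (X i) μ)
    (hnonneg : ∀ i ω, 0 ≤ X i ω)
    (hdec : ∀ i : ℕ, ∀ ω : Ω,
      (μ[X (i + 1) | ℱ i]) ω ≤ X i ω - ε * Set.indicator {ω | (i : ℕ∞) < T ω} (fun _ => 1) ω) :
    ∑' j : ℕ, (μ {ω | (j : ℕ∞) < T ω}).toReal ≤ (∫ ω, X 0 ω ∂μ) / ε := by
  set p : ℕ → ℝ := fun j => (μ {ω | (j : ℕ∞) < T ω}).toReal with hp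
  have hpnn : ∀ j, 0 ≤ p j := fun j => ENNReal.toReal_nonneg
  have hmeas : ∀ i : ℕ, MeasurableSet {ω | (i : ℕ∞) < T ω} := by
    intro i
    have : {ω | (i : ℕ∞) < T ω} = {ω | T ω ≤ (i : ℕ∞)}ᶜ := by
      ext ω; simp [not_le]
    rw [this]
    exact (ℱ.le i _ (hstop i)).compl
  have hind : ∀ i : ℕ, Integrable
      (fun ω => ε * Set.indicator {ω | (i : ℕ∞) < T ω} (fun _ => (1:ℝ)) ω) μ := by
    intro i
    exact (((integrable_const (1:ℝ)).indicator (hmeas i))).const_mul ε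
  have key : ∀ i : ℕ, ∫ ω, X (i+1) ω ∂μ + ε * p i ≤ ∫ ω, X i ω ∂μ := by
    intro i
    have h1 : ∫ ω, X (i+1) ω ∂μ = ∫ ω, (μ[X (i+1) | ℱ i]) ω ∂μ :=
      (integral_condExp (ℱ.le i)).symm
    have h2 : ∫ ω, (μ[X (i+1) | ℱ i]) ω ∂μ ≤
        ∫ ω, (X i ω - ε * Set.indicator {ω | (i : ℕ∞) < T ω} (fun _ => 1) ω) ∂μ :=
      integral_mono integrable_condExp ((hint i).sub (hind i)) (hdec i)
    have h3 : ∫ ω, (X i ω - ε * Set.indicator {ω | (i : ℕ∞) < T ω} (fun _ => 1) ω) ∂μ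
        = ∫ ω, X i ω ∂μ - ε * p i := by
      rw [integral_sub (hint i) (hind i), integral_const_mul]
      have : ∫ ω, Set.indicator {ω | (i : ℕ∞) < T ω} (fun _ => (1:ℝ)) ω ∂μ
          = (μ {ω | (i : ℕ∞) < T ω}).toReal := integral_indicator_one (hmeas i)
      rw [this]
    have := h1 ▸ (h3 ▸ h2)
    linarith
  have hXnn : ∀ n, 0 ≤ ∫ ω, X n ω ∂μ := fun n =>
    integral_nonneg (fun ω => hnonneg n ω)
  have partial_bound : ∀ n : ℕ,
      ε * ∑ j ∈ Finset.range n, p j + ∫ ω, X n ω ∂μ ≤ ∫ ω, X 0 ω ∂μ := by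
    intro n
    induction n with
    | zero => simp
    | succ n ih =>
      rw [Finset.sum_range_succ]
      have := key n
      linarith
  have hsum : ∀ n, ∑ j ∈ Finset.range n, p j ≤ (∫ ω, X 0 ω ∂μ) / ε := by
    intro n
    rw [le_div_iff₀ hε]
    have := partial_bound n
    have := hXnn n
    linarith [mul_comm ε (∑ j ∈ Finset.range n, p j)]
  exact Real.tsum_le_of_sum_range_le hpnn hsum
end

section
/- Let (X_i) be an ε-ranking supermartingale with ε > 0 with respect to a stopping time T, with E[X_0] < ∞. Then T is almost-surely finite: P[T < ∞] = 1. -/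
open MeasureTheory

/-!
Integrating the supermartingale inequality gives
`E[X_{i+1}] + ε P[T > i] ≤ E[X_i]`, and `P[T = ∞] ≤ P[T > i]` for every `i`.
Telescoping and `X_n ≥ 0` yield `n ε P[T = ∞] ≤ E[X_0]` for all `n`, so `P[T = ∞] = 0`.
-/

section

variable {α : Type*} [AddCommGroup α] [LinearOrder α] [IsOrderedAddMonoid α]

lemma nonpos_of_forall_nsmul_le [Archimedean α] {q C : α} (h : ∀ n : ℕ, n • q ≤ C) : q ≤ 0 := by
  by_contra! hq
  obtain ⟨n, hn⟩ := Archimedean.arch (C + q) hq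
  exact (lt_add_of_pos_right C hq).not_ge (hn.trans (h n))

lemma nsmul_le_sub_of_le_sub_succ {a : ℕ → α} {c : α} (h : ∀ i, c ≤ a i - a (i + 1)) (n : ℕ) :
    n • c ≤ a 0 - a n := by
  induction n with
  | zero => simp
  | succ n ih =>
    calc (n + 1) • c = n • c + c := succ_nsmul c n
      _ ≤ (a 0 - a n) + (a n - a (n + 1)) := add_le_add ih (h n)
      _ = a 0 - a (n + 1) := sub_add_sub_cancel _ _ _

end

lemma integral_add_mul_measureReal_le_of_condExp_le {Ω : Type*} {m m0 : MeasurableSpace Ω}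
    {μ : Measure Ω} [IsFiniteMeasure μ] {X Y : Ω → ℝ} {A : Set Ω} {ε : ℝ}
    (hm : m ≤ m0) (hA : MeasurableSet A) (hX : Integrable X μ)
    (h : ∀ᵐ ω ∂μ, μ[Y | m] ω ≤ X ω - ε * A.indicator 1 ω) :
    ∫ ω, Y ω ∂μ + ε * μ.real A ≤ ∫ ω, X ω ∂μ := by
  have hA_int : Integrable (fun ω => ε * A.indicator (1 : Ω → ℝ) ω) μ :=
    ((integrable_const (1 : ℝ)).indicator hA).const_mul ε
  have hle : ∫ ω, Y ω ∂μ ≤ ∫ ω, X ω - ε * A.indicator 1 ω ∂μ :=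
    (integral_condExp (μ := μ) (f := Y) hm) ▸ integral_mono_ae integrable_condExp (hX.sub hA_int) h
  rw [integral_sub hX hA_int, integral_const_mul, integral_indicator_one hA] at hle
  linarith

theorem rsm_stopping_time_finite_general
    {Ω : Type*} {m0 : MeasurableSpace Ω} {μ : Measure Ω} [IsProbabilityMeasure μ]
    (ℱ : Filtration ℕ m0) (X : ℕ → Ω → ℝ) (T : Ω → ℕ∞) (ε : ℝ) (hε : 0 < ε)
    (hstop : ∀ i : ℕ, MeasurableSet[ℱ i] {ω | T ω ≤ (i : ℕ∞)})
    (hint : ∀ i, Integrable (X i) μ)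
    (hnonneg : ∀ i ω, 0 ≤ X i ω)
    (hdec : ∀ i : ℕ, ∀ ω : Ω,
      (μ[X (i + 1) | ℱ i]) ω ≤ X i ω - ε * Set.indicator {ω | (i : ℕ∞) < T ω} (fun _ => 1) ω) :
    μ {ω | T ω < ⊤} = 1 := by
  have hrun : ∀ i : ℕ, MeasurableSet {ω | (i : ℕ∞) < T ω} := fun i => by
    simpa [Set.compl_ofPred, not_le] using (ℱ.le i _ (hstop i)).compl
  have hstep : ∀ i, ε * μ.real {ω | T ω = ⊤} ≤ ∫ ω, X i ω ∂μ - ∫ ω, X (i + 1) ω ∂μ := fun i => by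
    have hdrop := integral_add_mul_measureReal_le_of_condExp_le (ℱ.le i) (hrun i) (hint i)
      (ae_of_all μ (hdec i))
    have hinf : μ.real {ω | T ω = ⊤} ≤ μ.real {ω | (i : ℕ∞) < T ω} :=
      measureReal_mono fun ω (hω : T ω = ⊤) => show (i : ℕ∞) < T ω from hω ▸ ENat.natCast_lt_top i
    linarith [mul_le_mul_of_nonneg_left hinf hε.le]
  have hbound : ∀ n : ℕ, n • (ε * μ.real {ω | T ω = ⊤}) ≤ ∫ ω, X 0 ω ∂μ := fun n => by
    have hXn : 0 ≤ ∫ ω, X n ω ∂μ := integral_nonneg (hnonneg n)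
    linarith [nsmul_le_sub_of_le_sub_succ hstep n]
  have hnull : μ {ω | T ω = ⊤} = 0 := by
    have hle : μ.real {ω | T ω = ⊤} ≤ 0 :=
      nonpos_of_mul_nonpos_right (nonpos_of_forall_nsmul_le hbound) hε
    exact (measureReal_eq_zero_iff).mp (le_antisymm hle measureReal_nonneg)
  have hcompl : {ω | T ω < ⊤} = {ω | T ω = ⊤}ᶜ := by
    ext ω; simp [lt_top_iff_ne_top]
  rw [hcompl, prob_compl_eq_one_iff₀ (.of_null hnull)]
  exact hnull

/-- For an ε-RSM `X` (ε > 0) with respect to a stopping time `T`,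
the stopping time is almost surely finite: `P[T < ∞] = 1`. -/
theorem rsm_stopping_time_finite
    {Ω : Type*} {m0 : MeasurableSpace Ω} {μ : Measure Ω} [IsProbabilityMeasure μ]
    (ℱ : Filtration ℕ m0) (X : ℕ → Ω → ℝ) (T : Ω → ℕ∞) (ε : ℝ) (hε : 0 < ε)
    (hstop : ∀ i : ℕ, MeasurableSet[ℱ i] {ω | T ω ≤ (i : ℕ∞)})
    (hadapted : Adapted ℱ X)
    (hint : ∀ i, Integrable (X i) μ)
    (hnonneg : ∀ i ω, 0 ≤ X i ω)
    (hdec : ∀ i : ℕ, ∀ ω : Ω,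
      (μ[X (i + 1) | ℱ i]) ω ≤ X i ω - ε * Set.indicator {ω | (i : ℕ∞) < T ω} (fun _ => 1) ω) :
    μ {ω | T ω < ⊤} = 1 :=
  rsm_stopping_time_finite_general ℱ X T ε hε hstop hint hnonneg hdec
end

section
/- Let (X_i) be an ε-ranking supermartingale with ε > 0 with respect to a stopping time T, with E[X_0] < ∞. Then E[T] ≤ E[X_0]/ε. -/
/-! Taking expectations in the supermartingale inequality gives
`E[X (i+1)] + ε P[T > i] ≤ E[X i]`; telescoping and `X n ≥ 0` yield
`ε ∑_{i<n} P[T > i] ≤ E[X 0]` for every `n`, and `E[T] = ∑_i P[T > i]`. -/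

open MeasureTheory
open scoped ENNReal

theorem ENat.toENNReal_eq_tsum_ite (n : ℕ∞) :
    (n : ℝ≥0∞) = ∑' i : ℕ, if (i : ℕ∞) < n then 1 else 0 := by
  cases n with
  | top => simp
  | coe m =>
    rw [tsum_eq_sum (s := Finset.range m) fun i hi => by simp_all]
    simp [Finset.filter_true_of_mem fun i hi => Finset.mem_range.1 hi]

namespace MeasureTheory

variable {Ω : Type*} {m0 : MeasurableSpace Ω} {μ : Measure Ω}

theorem lintegral_enat_eq_tsum_measure_lt {T : Ω → ℕ∞}
    (hT : ∀ i : ℕ, MeasurableSet {ω | (i : ℕ∞) < T ω}) :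
    ∫⁻ ω, (T ω : ℝ≥0∞) ∂μ = ∑' i : ℕ, μ {ω | (i : ℕ∞) < T ω} := by
  calc ∫⁻ ω, (T ω : ℝ≥0∞) ∂μ
      = ∫⁻ ω, ∑' i : ℕ, {ω | (i : ℕ∞) < T ω}.indicator 1 ω ∂μ := by
        congr with ω
        rw [ENat.toENNReal_eq_tsum_ite]
        simp [Set.indicator_apply]
    _ = ∑' i : ℕ, μ {ω | (i : ℕ∞) < T ω} := by
        rw [lintegral_tsum fun i => (measurable_one.indicator (hT i)).aemeasurable]
        simp [lintegral_indicator_one (hT _)]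

variable [IsFiniteMeasure μ] {ℱ : Filtration ℕ m0} {X : ℕ → Ω → ℝ} {s : ℕ → Set Ω} {ε : ℝ}

theorem integral_succ_add_le_of_condExp_le {i : ℕ} (hs : MeasurableSet (s i))
    (hXi : Integrable (X i) μ)
    (hdec : μ[X (i + 1) | ℱ i] ≤ᵐ[μ] fun ω => X i ω - ε * (s i).indicator (fun _ => 1) ω) :
    ∫ ω, X (i + 1) ω ∂μ + ε * μ.real (s i) ≤ ∫ ω, X i ω ∂μ := by
  have hind : Integrable (fun ω => ε * (s i).indicator (fun _ => (1 : ℝ)) ω) μ :=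
    ((integrable_const 1).indicator hs).const_mul ε
  have hmono := integral_mono_ae integrable_condExp (hXi.sub hind) hdec
  simp only [Pi.sub_apply] at hmono
  rw [integral_condExp (ℱ.le i), integral_sub hXi hind, integral_const_mul,
    integral_indicator_const 1 hs, smul_eq_mul, mul_one] at hmono
  linarith

theorem integral_add_mul_sum_measureReal_le_of_condExp_le (hs : ∀ i, MeasurableSet (s i))
    (hint : ∀ i, Integrable (X i) μ)
    (hdec : ∀ i, μ[X (i + 1) | ℱ i] ≤ᵐ[μ] fun ω => X i ω - ε * (s i).indicator (fun _ => 1) ω)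
    (n : ℕ) :
    ∫ ω, X n ω ∂μ + ε * ∑ i ∈ Finset.range n, μ.real (s i) ≤ ∫ ω, X 0 ω ∂μ := by
  induction n with
  | zero => simp
  | succ n ih =>
    have hstep := integral_succ_add_le_of_condExp_le (hs n) (hint n) (hdec n)
    rw [Finset.sum_range_succ, mul_add]
    linarith

end MeasureTheory

theorem rsm_expected_stopping_time_bound_general
    {Ω : Type*} {m0 : MeasurableSpace Ω} {μ : Measure Ω} [IsProbabilityMeasure μ]
    (ℱ : Filtration ℕ m0) (X : ℕ → Ω → ℝ) (T : Ω → ℕ∞) (ε : ℝ) (hε : 0 < ε)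
    (hstop : ∀ i : ℕ, MeasurableSet[ℱ i] {ω | T ω ≤ (i : ℕ∞)})
    (hint : ∀ i, Integrable (X i) μ)
    (hnonneg : ∀ i ω, 0 ≤ X i ω)
    (hdec : ∀ i : ℕ, ∀ ω : Ω,
      (μ[X (i + 1) | ℱ i]) ω ≤ X i ω - ε * Set.indicator {ω | (i : ℕ∞) < T ω} (fun _ => 1) ω) :
    ∫⁻ ω, (T ω : ℝ≥0∞) ∂μ ≤ ENNReal.ofReal ((∫ ω, X 0 ω ∂μ) / ε) := by
  have hs : ∀ i : ℕ, MeasurableSet {ω | (i : ℕ∞) < T ω} := fun i => by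
    simpa only [Set.compl_ofPred, not_le] using (ℱ.le i _ (hstop i)).compl
  have hpartial (n : ℕ) :
      ∑ i ∈ Finset.range n, μ {ω | (i : ℕ∞) < T ω} ≤ ENNReal.ofReal ((∫ ω, X 0 ω ∂μ) / ε) := by
    have hbound := integral_add_mul_sum_measureReal_le_of_condExp_le hs hint
      (fun i => ae_of_all μ (hdec i)) n
    have hXn : 0 ≤ ∫ ω, X n ω ∂μ := integral_nonneg (hnonneg n)
    rw [← ENNReal.ofReal_toReal (ENNReal.sum_ne_top.2 fun _ _ => measure_ne_top _ _),
      ENNReal.toReal_sum fun _ _ => measure_ne_top _ _]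
    refine ENNReal.ofReal_le_ofReal ((le_div_iff₀' hε).2 ?_)
    simp only [measureReal_def] at hbound
    linarith
  rw [lintegral_enat_eq_tsum_measure_lt hs]
  exact ENNReal.tsum_le_of_sum_range_le hpartial

/-- For an ε-RSM `X` (ε > 0) with respect to a stopping time `T`,
`E[T] ≤ E[X 0] / ε`. -/
theorem rsm_expected_stopping_time_bound
    {Ω : Type*} {m0 : MeasurableSpace Ω} {μ : Measure Ω} [IsProbabilityMeasure μ]
    (ℱ : Filtration ℕ m0) (X : ℕ → Ω → ℝ) (T : Ω → ℕ∞) (ε : ℝ) (hε : 0 < ε)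
    (hstop : ∀ i : ℕ, MeasurableSet[ℱ i] {ω | T ω ≤ (i : ℕ∞)})
    (hadapted : Adapted ℱ X)
    (hint : ∀ i, Integrable (X i) μ)
    (hnonneg : ∀ i ω, 0 ≤ X i ω)
    (hdec : ∀ i : ℕ, ∀ ω : Ω,
      (μ[X (i + 1) | ℱ i]) ω ≤ X i ω - ε * Set.indicator {ω | (i : ℕ∞) < T ω} (fun _ => 1) ω) :
    ∫⁻ ω, (T ω : ℝ≥0∞) ∂μ ≤ ENNReal.ofReal ((∫ ω, X 0 ω ∂μ) / ε) :=
  rsm_expected_stopping_time_bound_general ℱ X T ε hε hstop hint hnonneg hdec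
end

section
/- Let (X_i) be an ε-ranking supermartingale with ε > 0 with respect to a stopping time T, with E[X_0] < ∞. Then for every t ∈ ℕ with t ≥ 1, P[T ≥ t] ≤ E[X_0]/(ε·t). -/
/-!
Integrating the supermartingale inequality gives `E[X (i + 1)] ≤ E[X i] - ε P[T > i]`. Summing over
`i < t` and using `X t ≥ 0` yields `ε ∑_{i < t} P[T > i] ≤ E[X 0]`, and each of these `t`
probabilities is at least `P[T ≥ t]`.
-/

open MeasureTheory Filter

section

variable {Ω : Type*} {m0 : MeasurableSpace Ω} {μ : Measure Ω} [IsFiniteMeasure μ]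

lemma integral_le_sub_of_condExp_le_sub_indicator {m : MeasurableSpace Ω} (hm : m ≤ m0)
    {f g : Ω → ℝ} {s : Set Ω} (hs : MeasurableSet[m0] s) (c : ℝ) (hg : Integrable g μ)
    (h : ∀ᵐ ω ∂μ, μ[f | m] ω ≤ g ω - c * s.indicator (fun _ => 1) ω) :
    ∫ ω, f ω ∂μ ≤ ∫ ω, g ω ∂μ - c * μ.real s := by
  have hind : Integrable (fun ω => c * s.indicator (fun _ => (1 : ℝ)) ω) μ :=
    ((integrable_const (1 : ℝ)).indicator hs).const_mul c
  calc ∫ ω, f ω ∂μ = ∫ ω, μ[f | m] ω ∂μ := (integral_condExp hm).symm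
    _ ≤ ∫ ω, g ω - c * s.indicator (fun _ => 1) ω ∂μ :=
      integral_mono_ae integrable_condExp (hg.sub hind) h
    _ = ∫ ω, g ω ∂μ - c * μ.real s := by
      rw [integral_sub hg hind, integral_const_mul, integral_indicator_const (1 : ℝ) hs,
        smul_eq_mul, mul_one]

lemma mul_measureReal_le_sum_range_measureReal_lt (T : Ω → ℕ∞) (t : ℕ) :
    t * μ.real {ω | (t : ℕ∞) ≤ T ω} ≤ ∑ i ∈ Finset.range t, μ.real {ω | (i : ℕ∞) < T ω} := by
  have := Finset.card_nsmul_le_sum (Finset.range t) (fun i : ℕ => μ.real {ω | (i : ℕ∞) < T ω})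
    (μ.real {ω | (t : ℕ∞) ≤ T ω}) fun i hi => measureReal_mono fun ω (hω : (t : ℕ∞) ≤ T ω) =>
      lt_of_lt_of_le (by exact_mod_cast Finset.mem_range.mp hi) hω
  rwa [Finset.card_range, nsmul_eq_mul] at this

end

lemma add_sum_range_le_of_succ_le_sub {a b : ℕ → ℝ} (h : ∀ i, a (i + 1) ≤ a i - b i) (t : ℕ) :
    a t + ∑ i ∈ Finset.range t, b i ≤ a 0 := by
  induction t with
  | zero => simp
  | succ n ih =>
    rw [Finset.sum_range_succ]
    linarith [h n]

theorem rsm_stopping_time_markov_bound_general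
    {Ω : Type*} {m0 : MeasurableSpace Ω} {μ : Measure Ω} [IsProbabilityMeasure μ]
    (ℱ : Filtration ℕ m0) (X : ℕ → Ω → ℝ) (T : Ω → ℕ∞) (ε : ℝ) (hε : 0 < ε)
    (hstop : ∀ i : ℕ, MeasurableSet[ℱ i] {ω | T ω ≤ (i : ℕ∞)})
    (hint : ∀ i, Integrable (X i) μ)
    (hnonneg : ∀ i ω, 0 ≤ X i ω)
    (hdec : ∀ i : ℕ, ∀ ω : Ω,
      (μ[X (i + 1) | ℱ i]) ω ≤ X i ω - ε * Set.indicator {ω | (i : ℕ∞) < T ω} (fun _ => 1) ω) :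
    ∀ t : ℕ, 1 ≤ t →
      (μ {ω | (t : ℕ∞) ≤ T ω}).toReal ≤ (∫ ω, X 0 ω ∂μ) / (ε * t) := by
  intro t ht
  have hlive : ∀ i : ℕ, MeasurableSet {ω | (i : ℕ∞) < T ω} := fun i => by
    simpa only [Set.compl_ofPred, not_le] using ℱ.le i _ (hstop i).compl
  have hstep : ∀ i, ∫ ω, X (i + 1) ω ∂μ ≤ ∫ ω, X i ω ∂μ - ε * μ.real {ω | (i : ℕ∞) < T ω} :=
    fun i => integral_le_sub_of_condExp_le_sub_indicator (ℱ.le i) (hlive i) ε (hint i)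
      (ae_of_all _ (hdec i))
  have hsum := add_sum_range_le_of_succ_le_sub (a := fun i => ∫ ω, X i ω ∂μ)
    (b := fun i => ε * μ.real {ω | (i : ℕ∞) < T ω}) hstep t
  have hcount := mul_le_mul_of_nonneg_left
    (mul_measureReal_le_sum_range_measureReal_lt (μ := μ) T t) hε.le
  have hXt : 0 ≤ ∫ ω, X t ω ∂μ := integral_nonneg (hnonneg t)
  have ht' : (0 : ℝ) < t := by exact_mod_cast ht
  rw [← Finset.mul_sum] at hsum
  rw [← measureReal_def, le_div_iff₀ (by positivity)]
  linarith

/-- For an ε-RSM `X` (ε > 0) with respect to a stopping time `T`,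
`P[T ≥ t] ≤ E[X 0] / (ε * t)` for every `t ≥ 1`. -/
theorem rsm_stopping_time_markov_bound
    {Ω : Type*} {m0 : MeasurableSpace Ω} {μ : Measure Ω} [IsProbabilityMeasure μ]
    (ℱ : Filtration ℕ m0) (X : ℕ → Ω → ℝ) (T : Ω → ℕ∞) (ε : ℝ) (hε : 0 < ε)
    (hstop : ∀ i : ℕ, MeasurableSet[ℱ i] {ω | T ω ≤ (i : ℕ∞)})
    (hadapted : Adapted ℱ X)
    (hint : ∀ i, Integrable (X i) μ)
    (hnonneg : ∀ i ω, 0 ≤ X i ω)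
    (hdec : ∀ i : ℕ, ∀ ω : Ω,
      (μ[X (i + 1) | ℱ i]) ω ≤ X i ω - ε * Set.indicator {ω | (i : ℕ∞) < T ω} (fun _ => 1) ω) :
    ∀ t : ℕ, 1 ≤ t →
      (μ {ω | (t : ℕ∞) ≤ T ω}).toReal ≤ (∫ ω, X 0 ω ∂μ) / (ε * t) :=
  rsm_stopping_time_markov_bound_general ℱ X T ε hε hstop hint hnonneg hdec
end

section
/- Let (X_i) be an ε-ranking supermartingale with ε > 0 with respect to a stopping time T, where X_0 is a constant x_0 ≥ 0 and the process has c-bounded differences, i.e., |X_{i+1}(ω) − X_i(ω)| ≤ c pointwise for all i. Then for every t ∈ ℕ with t ≥ 1, P[T ≥ t] ≤ A · exp(−t·ε²/(2(c+ε)²)), where A = exp(ε·x_0/(c+ε)²). -/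
/-!
Put `Y n = X n + ε * min n T`. The drift condition makes `Y` a supermartingale, and its increments
are bounded by `d = c + ε`. By convexity, `exp (l * z) ≤ cosh (l * d) + sinh (l * d) / d * z`
for `|z| ≤ d`, so conditioning on the past gives
`E[exp (l * (Y n - Y 0))] ≤ exp (n * l ^ 2 * d ^ 2 / 2)` for `l ≥ 0` (Azuma), and Chernoff's
bound controls `P[Y 0 + a ≤ Y n]`. On `{t ≤ T}` we have `Y t ≥ ε * t` while `Y 0 = x₀`; the choice
`l = ε / (c + ε) ^ 2` yields the stated bound.
-/

open MeasureTheory ProbabilityTheory Finset Real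

lemma Real.exp_mul_le_cosh_add_mul {d z : ℝ} (hz : |z| ≤ d) (l : ℝ) :
    exp (l * z) ≤ cosh (l * d) + sinh (l * d) / d * z := by
  rcases ((abs_nonneg z).trans hz).eq_or_lt with rfl | hd
  · simp [abs_nonpos_iff.mp hz]
  obtain ⟨hz₁, hz₂⟩ := abs_le.mp hz
  -- `l * z` is the convex combination of `± l * d` with weights `(d ± z) / (2 * d)`.
  have hconv := convexOn_exp.2 (Set.mem_univ (l * d)) (Set.mem_univ (-(l * d)))
    (div_nonneg (by linarith) (by positivity) : 0 ≤ (d + z) / (2 * d))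
    (div_nonneg (by linarith) (by positivity) : 0 ≤ (d - z) / (2 * d))
    (by field_simp; ring)
  simp only [smul_eq_mul] at hconv
  refine (le_of_eq ?_).trans (hconv.trans (le_of_eq ?_))
  · congr 1; field_simp; ring
  · rw [cosh_eq, sinh_eq]; field_simp; ring

lemma MeasureTheory.Supermartingale.integral_mul_le_integral_mul {Ω ι : Type*}
    {m0 : MeasurableSpace Ω} {μ : Measure Ω} [Preorder ι] [IsFiniteMeasure μ]
    {ℱ : Filtration ι m0} {f : ι → Ω → ℝ} (hf : Supermartingale f ℱ μ) {i j : ι} (hij : i ≤ j)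
    {g : Ω → ℝ} (hg : StronglyMeasurable[ℱ i] g) (hg₀ : ∀ᵐ ω ∂μ, 0 ≤ g ω) {C : ℝ}
    (hgC : ∀ᵐ ω ∂μ, ‖g ω‖ ≤ C) :
    ∫ ω, g ω * f j ω ∂μ ≤ ∫ ω, g ω * f i ω ∂μ := by
  have hg' : AEStronglyMeasurable g μ := (hg.mono (ℱ.le i)).aestronglyMeasurable
  calc ∫ ω, g ω * f j ω ∂μ = ∫ ω, (μ[g * f j | ℱ i]) ω ∂μ :=
        (integral_condExp (ℱ.le i)).symm
    _ = ∫ ω, g ω * (μ[f j | ℱ i]) ω ∂μ :=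
        integral_congr_ae (condExp_mul_of_stronglyMeasurable_left hg
          ((hf.integrable j).bdd_mul hg' hgC) (hf.integrable j))
    _ ≤ ∫ ω, g ω * f i ω ∂μ := by
        refine integral_mono_ae (integrable_condExp.bdd_mul hg' hgC)
          ((hf.integrable i).bdd_mul hg' hgC) ?_
        filter_upwards [hf.condExp_ae_le hij, hg₀] with ω hω hgω
        exact mul_le_mul_of_nonneg_left hω hgω

lemma abs_sub_zero_le_mul_of_abs_sub_succ_le {u : ℕ → ℝ} {d : ℝ}
    (hu : ∀ i, |u (i + 1) - u i| ≤ d) (n : ℕ) : |u n - u 0| ≤ n * d :=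
  calc |u n - u 0| = dist (u 0) (u n) := by rw [Real.dist_eq, abs_sub_comm]
    _ ≤ ∑ i ∈ range n, dist (u i) (u (i + 1)) := dist_le_range_sum_dist u n
    _ ≤ ∑ _i ∈ range n, d := sum_le_sum fun i _ => by rw [Real.dist_eq, abs_sub_comm]; exact hu i
    _ = n * d := by simp

section Azuma

variable {Ω : Type*} {m0 : MeasurableSpace Ω} {μ : Measure Ω} {ℱ : Filtration ℕ m0}
  {f : ℕ → Ω → ℝ} {d : ℝ}

lemma ae_norm_exp_mul_sub_zero_le (hd : ∀ᵐ ω ∂μ, ∀ i, |f (i + 1) ω - f i ω| ≤ d) (l : ℝ)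
    (n : ℕ) : ∀ᵐ ω ∂μ, ‖exp (l * (f n ω - f 0 ω))‖ ≤ exp (|l| * (n * d)) := by
  filter_upwards [hd] with ω hω
  rw [norm_of_nonneg (exp_pos _).le, exp_le_exp]
  calc l * (f n ω - f 0 ω) ≤ |l| * |f n ω - f 0 ω| := by rw [← abs_mul]; exact le_abs_self _
    _ ≤ |l| * (n * d) := mul_le_mul_of_nonneg_left
        (abs_sub_zero_le_mul_of_abs_sub_succ_le (u := fun i => f i ω) hω n) (abs_nonneg l)

lemma MeasureTheory.StronglyAdapted.stronglyMeasurable_exp_mul_sub_zero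
    (hf : StronglyAdapted ℱ f) (l : ℝ) (n : ℕ) :
    StronglyMeasurable[ℱ n] fun ω => exp (l * (f n ω - f 0 ω)) :=
  continuous_exp.comp_stronglyMeasurable
    (((hf n).sub ((hf 0).mono (ℱ.mono (Nat.zero_le n)))).const_mul l)

lemma MeasureTheory.StronglyAdapted.integrable_exp_mul_sub_zero [IsFiniteMeasure μ]
    (hf : StronglyAdapted ℱ f)
    (hd : ∀ᵐ ω ∂μ, ∀ i, |f (i + 1) ω - f i ω| ≤ d) (l : ℝ) (n : ℕ) :
    Integrable (fun ω => exp (l * (f n ω - f 0 ω))) μ :=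
  .of_bound ((hf.stronglyMeasurable_exp_mul_sub_zero l n).mono (ℱ.le n)).aestronglyMeasurable
    _ (ae_norm_exp_mul_sub_zero_le hd l n)

namespace MeasureTheory.Supermartingale

lemma integral_mul_exp_mul_sub_le_cosh [IsFiniteMeasure μ] (hf : Supermartingale f ℱ μ)
    (hd : ∀ᵐ ω ∂μ, ∀ i, |f (i + 1) ω - f i ω| ≤ d) {l : ℝ} (hl : 0 ≤ l) {n : ℕ} {g : Ω → ℝ}
    (hg : StronglyMeasurable[ℱ n] g) (hg₀ : ∀ ω, 0 ≤ g ω) {C : ℝ} (hgC : ∀ᵐ ω ∂μ, ‖g ω‖ ≤ C)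
    (h_int : Integrable (fun ω => g ω * exp (l * (f (n + 1) ω - f n ω))) μ) :
    ∫ ω, g ω * exp (l * (f (n + 1) ω - f n ω)) ∂μ ≤ cosh (l * d) * ∫ ω, g ω ∂μ := by
  have hgf (k : ℕ) : Integrable (fun ω => g ω * f k ω) μ :=
    (hf.integrable k).bdd_mul (hg.mono (ℱ.le n)).aestronglyMeasurable hgC
  have hg_int : Integrable g μ := .of_bound (hg.mono (ℱ.le n)).aestronglyMeasurable C hgC
  have hs : 0 ≤ sinh (l * d) / d := by
    rcases le_total 0 d with hd₀ | hd₀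
    · exact div_nonneg (sinh_nonneg_iff.2 (mul_nonneg hl hd₀)) hd₀
    · exact div_nonneg_of_nonpos (sinh_nonpos_iff.2 (mul_nonpos_of_nonneg_of_nonpos hl hd₀)) hd₀
  have hpt : ∀ᵐ ω ∂μ, g ω * exp (l * (f (n + 1) ω - f n ω)) ≤
      cosh (l * d) * g ω + sinh (l * d) / d * (g ω * f (n + 1) ω - g ω * f n ω) := by
    filter_upwards [hd] with ω hω
    calc g ω * exp (l * (f (n + 1) ω - f n ω))
        ≤ g ω * (cosh (l * d) + sinh (l * d) / d * (f (n + 1) ω - f n ω)) :=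
          mul_le_mul_of_nonneg_left (exp_mul_le_cosh_add_mul (hω n) l) (hg₀ ω)
      _ = _ := by ring
  have hcosh_int : Integrable (fun ω => cosh (l * d) * g ω) μ := hg_int.const_mul _
  have hsinh_int : Integrable
      (fun ω => sinh (l * d) / d * (g ω * f (n + 1) ω - g ω * f n ω)) μ :=
    ((hgf _).sub (hgf _)).const_mul _
  calc ∫ ω, g ω * exp (l * (f (n + 1) ω - f n ω)) ∂μ
      ≤ ∫ ω, cosh (l * d) * g ω + sinh (l * d) / d * (g ω * f (n + 1) ω - g ω * f n ω) ∂μ :=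
        integral_mono_ae h_int (hcosh_int.add hsinh_int) hpt
    _ = cosh (l * d) * ∫ ω, g ω ∂μ +
          sinh (l * d) / d * (∫ ω, g ω * f (n + 1) ω ∂μ - ∫ ω, g ω * f n ω ∂μ) := by
        rw [integral_add hcosh_int hsinh_int,
          integral_const_mul, integral_const_mul, integral_sub (hgf _) (hgf _)]
    _ ≤ cosh (l * d) * ∫ ω, g ω ∂μ := by
        have := hf.integral_mul_le_integral_mul n.le_succ hg (ae_of_all _ hg₀) hgC
        nlinarith

lemma integral_exp_mul_sub_zero_succ_le [IsFiniteMeasure μ] (hf : Supermartingale f ℱ μ)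
    (hd : ∀ᵐ ω ∂μ, ∀ i, |f (i + 1) ω - f i ω| ≤ d) {l : ℝ} (hl : 0 ≤ l) (n : ℕ) :
    ∫ ω, exp (l * (f (n + 1) ω - f 0 ω)) ∂μ ≤
      exp (l ^ 2 * d ^ 2 / 2) * ∫ ω, exp (l * (f n ω - f 0 ω)) ∂μ := by
  have hsplit : (fun ω => exp (l * (f (n + 1) ω - f 0 ω))) =
      fun ω => exp (l * (f n ω - f 0 ω)) * exp (l * (f (n + 1) ω - f n ω)) :=
    funext fun ω => by rw [← exp_add]; ring_nf
  calc ∫ ω, exp (l * (f (n + 1) ω - f 0 ω)) ∂μ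
      = ∫ ω, exp (l * (f n ω - f 0 ω)) * exp (l * (f (n + 1) ω - f n ω)) ∂μ := by rw [hsplit]
    _ ≤ cosh (l * d) * ∫ ω, exp (l * (f n ω - f 0 ω)) ∂μ :=
        hf.integral_mul_exp_mul_sub_le_cosh hd hl (hf.1.stronglyMeasurable_exp_mul_sub_zero l n)
          (fun ω => (exp_pos _).le) (ae_norm_exp_mul_sub_zero_le hd l n)
          (hsplit ▸ hf.1.integrable_exp_mul_sub_zero hd l (n + 1))
    _ ≤ exp (l ^ 2 * d ^ 2 / 2) * ∫ ω, exp (l * (f n ω - f 0 ω)) ∂μ := by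
        gcongr
        exact (cosh_le_exp_half_sq _).trans_eq (by ring_nf)

lemma integral_exp_mul_sub_zero_le [IsProbabilityMeasure μ] (hf : Supermartingale f ℱ μ)
    (hd : ∀ᵐ ω ∂μ, ∀ i, |f (i + 1) ω - f i ω| ≤ d) {l : ℝ} (hl : 0 ≤ l) (n : ℕ) :
    ∫ ω, exp (l * (f n ω - f 0 ω)) ∂μ ≤ exp (n * (l ^ 2 * d ^ 2 / 2)) := by
  induction n with
  | zero => simp
  | succ n ih =>
    calc ∫ ω, exp (l * (f (n + 1) ω - f 0 ω)) ∂μ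
        ≤ exp (l ^ 2 * d ^ 2 / 2) * ∫ ω, exp (l * (f n ω - f 0 ω)) ∂μ :=
          hf.integral_exp_mul_sub_zero_succ_le hd hl n
      _ ≤ exp (l ^ 2 * d ^ 2 / 2) * exp (n * (l ^ 2 * d ^ 2 / 2)) := by gcongr
      _ = exp ((n + 1 : ℕ) * (l ^ 2 * d ^ 2 / 2)) := by rw [← exp_add]; push_cast; ring_nf

/-- Azuma's inequality, in Chernoff form with the parameter `l` not yet optimized. -/
lemma measureReal_add_le_le [IsProbabilityMeasure μ] (hf : Supermartingale f ℱ μ)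
    (hd : ∀ᵐ ω ∂μ, ∀ i, |f (i + 1) ω - f i ω| ≤ d) {l : ℝ} (hl : 0 ≤ l) (n : ℕ) (a : ℝ) :
    μ.real {ω | f 0 ω + a ≤ f n ω} ≤
      exp (-l * a + n * (l ^ 2 * d ^ 2 / 2)) := by
  calc μ.real {ω | f 0 ω + a ≤ f n ω} = μ.real {ω | a ≤ f n ω - f 0 ω} := by
        simp_rw [le_sub_iff_add_le']
    _ ≤ exp (-l * a) * mgf (fun ω => f n ω - f 0 ω) μ l :=
        measure_ge_le_exp_mul_mgf a hl (hf.1.integrable_exp_mul_sub_zero hd l n)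
    _ ≤ exp (-l * a) * exp (n * (l ^ 2 * d ^ 2 / 2)) := by
        gcongr; exact hf.integral_exp_mul_sub_zero_le hd hl n
    _ = exp (-l * a + n * (l ^ 2 * d ^ 2 / 2)) := by rw [← exp_add]

end MeasureTheory.Supermartingale

end Azuma

lemma MeasureTheory.supermartingale_add_sum_of_condExp_le {Ω : Type*} {m0 : MeasurableSpace Ω}
    {μ : Measure Ω} [IsFiniteMeasure μ] {ℱ : Filtration ℕ m0} {X A : ℕ → Ω → ℝ}
    (hX : StronglyAdapted ℱ X) (hX_int : ∀ i, Integrable (X i) μ)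
    (hA : StronglyAdapted ℱ A) (hA_int : ∀ i, Integrable (A i) μ)
    (hdec : ∀ i, μ[X (i + 1) | ℱ i] ≤ᵐ[μ] X i - A i) :
    Supermartingale (fun n => X n + ∑ i ∈ range n, A i) ℱ μ := by
  have hS_meas {n k : ℕ} (hk : k ≤ n + 1) : StronglyMeasurable[ℱ n] (∑ i ∈ range k, A i) :=
    stronglyMeasurable_sum _ fun i hi => (hA i).mono (ℱ.mono (by grind))
  have hS_int (k : ℕ) : Integrable (∑ i ∈ range k, A i) μ :=
    integrable_finsetSum' _ fun i _ => hA_int i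
  refine supermartingale_nat (fun n => (hX n).add (hS_meas n.le_succ))
    (fun n => (hX_int n).add (hS_int n)) fun n => ?_
  filter_upwards [condExp_add (hX_int (n + 1)) (hS_int (n + 1)) (ℱ n), hdec n] with ω hsum hX_le
  rw [hsum, Pi.add_apply, condExp_of_stronglyMeasurable (ℱ.le n) (hS_meas le_rfl) (hS_int _)]
  simp only [Pi.add_apply, Pi.sub_apply, sum_range_succ, Finset.sum_apply] at hX_le ⊢
  linarith

lemma sum_range_mul_indicator_lt_of_le {Ω : Type*} {T : Ω → ℕ∞} {ω : Ω} {t : ℕ}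
    (hω : (t : ℕ∞) ≤ T ω) (a : ℝ) :
    ∑ i ∈ range t, a * Set.indicator {ω | (i : ℕ∞) < T ω} (fun _ => 1) ω = a * t := by
  calc _ = ∑ _i ∈ range t, a := sum_congr rfl fun i hi => by
          simp [(Nat.cast_lt.2 (mem_range.1 hi)).trans_le hω]
    _ = a * t := by simp [mul_comm]

theorem rsm_stopping_time_concentration_bound_general
    {Ω : Type*} {m0 : MeasurableSpace Ω} {μ : Measure Ω} [IsProbabilityMeasure μ]
    (ℱ : Filtration ℕ m0) (X : ℕ → Ω → ℝ) (T : Ω → ℕ∞) (ε : ℝ) (hε : 0 < ε)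
    (hstop : ∀ i : ℕ, MeasurableSet[ℱ i] {ω | T ω ≤ (i : ℕ∞)})
    (hadapted : Adapted ℱ X)
    (hint : ∀ i, Integrable (X i) μ)
    (hnonneg : ∀ i ω, 0 ≤ X i ω)
    (hdec : ∀ i : ℕ, ∀ ω : Ω,
      (μ[X (i + 1) | ℱ i]) ω ≤ X i ω - ε * Set.indicator {ω | (i : ℕ∞) < T ω} (fun _ => 1) ω)
    (x₀ c : ℝ) (hc : 0 < c)
    (hX0 : ∀ ω : Ω, X 0 ω = x₀)
    (hbdd : ∀ i : ℕ, ∀ ω : Ω, |X (i + 1) ω - X i ω| ≤ c) :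
    ∀ t : ℕ, 1 ≤ t →
      (μ {ω | (t : ℕ∞) ≤ T ω}).toReal ≤
        Real.exp (ε * x₀ / (c + ε) ^ 2) * Real.exp (-(t : ℝ) * ε ^ 2 / (2 * (c + ε) ^ 2)) := by
  intro t _
  set A : ℕ → Ω → ℝ := fun i ω => ε * Set.indicator {ω | (i : ℕ∞) < T ω} (fun _ => 1) ω
  have hT : IsStoppingTime ℱ T := hstop
  have hA_meas : StronglyAdapted ℱ A := fun i =>
    (stronglyMeasurable_const.indicator (hT.measurableSet_gt i)).const_mul ε
  have hA_le (i : ℕ) (ω : Ω) : |A i ω| ≤ ε := by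
    by_cases h : (i : ℕ∞) < T ω <;> simp [A, h, abs_of_pos hε, hε.le]
  -- `∑ i ∈ range n, A i ω = ε * min n (T ω)`, so `Y` is the paper's `X + ε * min(·, T)`.
  set Y : ℕ → Ω → ℝ := fun n => X n + ∑ i ∈ range n, A i with hY
  have hY_super : Supermartingale Y ℱ μ :=
    supermartingale_add_sum_of_condExp_le hadapted.stronglyAdapted hint hA_meas
      (fun i => .of_bound ((hA_meas i).mono (ℱ.le i)).aestronglyMeasurable ε
        (ae_of_all _ fun ω => hA_le i ω)) fun i => ae_of_all _ (hdec i)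
  have hY_diff : ∀ᵐ ω ∂μ, ∀ i, |Y (i + 1) ω - Y i ω| ≤ c + ε := ae_of_all _ fun ω i => by
    simp only [hY, Pi.add_apply, sum_range_succ, Finset.sum_apply]
    calc _ = |(X (i + 1) ω - X i ω) + A i ω| := by ring_nf
      _ ≤ c + ε := (abs_add_le _ _).trans (add_le_add (hbdd i ω) (hA_le i ω))
  have hevent : {ω | (t : ℕ∞) ≤ T ω} ⊆ {ω | Y 0 ω + (ε * t - x₀) ≤ Y t ω} := fun ω hω => by
    simp only [Set.mem_ofPred_eq, hY, A, Pi.add_apply, Finset.sum_apply,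
      sum_range_mul_indicator_lt_of_le hω, hX0, range_zero, sum_empty]
    linarith [hnonneg t ω]
  calc (μ {ω | (t : ℕ∞) ≤ T ω}).toReal ≤ μ.real {ω | Y 0 ω + (ε * t - x₀) ≤ Y t ω} :=
        measureReal_mono hevent
    _ ≤ exp (-(ε / (c + ε) ^ 2) * (ε * t - x₀) + t * ((ε / (c + ε) ^ 2) ^ 2 * (c + ε) ^ 2 / 2)) :=
        hY_super.measureReal_add_le_le hY_diff (by positivity) t _
    _ = exp (ε * x₀ / (c + ε) ^ 2) * exp (-(t : ℝ) * ε ^ 2 / (2 * (c + ε) ^ 2)) := by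
        rw [← exp_add]
        congr 1
        field_simp
        ring

/-- If `X` is an ε-RSM with respect to the stopping time `T`, starting from a
constant value `x₀ ≥ 0` and with `c`-bounded differences, then for every `t ≥ 1`,
`P[T ≥ t] ≤ exp (ε·x₀/(c+ε)²) * exp (-t·ε²/(2(c+ε)²))`. -/
theorem rsm_stopping_time_concentration_bound
    {Ω : Type*} {m0 : MeasurableSpace Ω} {μ : Measure Ω} [IsProbabilityMeasure μ]
    (ℱ : Filtration ℕ m0) (X : ℕ → Ω → ℝ) (T : Ω → ℕ∞) (ε : ℝ) (hε : 0 < ε)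
    (hstop : ∀ i : ℕ, MeasurableSet[ℱ i] {ω | T ω ≤ (i : ℕ∞)})
    (hadapted : Adapted ℱ X)
    (hint : ∀ i, Integrable (X i) μ)
    (hnonneg : ∀ i ω, 0 ≤ X i ω)
    (hdec : ∀ i : ℕ, ∀ ω : Ω,
      (μ[X (i + 1) | ℱ i]) ω ≤ X i ω - ε * Set.indicator {ω | (i : ℕ∞) < T ω} (fun _ => 1) ω)
    (x₀ c : ℝ) (hx₀ : 0 ≤ x₀) (hc : 0 < c)
    (hX0 : ∀ ω : Ω, X 0 ω = x₀)
    (hbdd : ∀ i : ℕ, ∀ ω : Ω, |X (i + 1) ω - X i ω| ≤ c) :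
    ∀ t : ℕ, 1 ≤ t →
      (μ {ω | (t : ℕ∞) ≤ T ω}).toReal ≤
        Real.exp (ε * x₀ / (c + ε) ^ 2) * Real.exp (-(t : ℝ) * ε ^ 2 / (2 * (c + ε) ^ 2)) :=
  rsm_stopping_time_concentration_bound_general ℱ X T ε hε hstop hadapted hint hnonneg hdec x₀ c hc
    hX0 hbdd
end

section
/- (Azuma's inequality for supermartingales) Let (Y_i) be a supermartingale with respect to a filtration (F_i), and let (c_i) be positive reals with |Y_{i+1}(ω) − Y_i(ω)| ≤ c_i for all i and ω. Then for every n ∈ ℕ and t > 0, P[Y_n − Y_0 ≥ t] ≤ exp(−t² / (2·Σ_{i=0}^{n−1} c_i²)). -/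
/-!
The increment `D = Y (i + 1) - Y i` lies in `[-c i, c i]` and has nonpositive conditional mean
given `ℱ i`. By convexity, `exp (l * D)` lies below the chord of `exp (l * ·)` over
`[-c i, c i]`, an affine function of `D`; taking conditional expectations gives, for `l ≥ 0`,
`E[exp (l * D) | ℱ i] ≤ cosh (l * c i) ≤ exp ((c i) ^ 2 * l ^ 2 / 2)`. Iterating with the
pull-out property bounds the moment generating function of `Y n - Y 0` on `[0, ∞)` by
`exp ((∑ (c i) ^ 2) * l ^ 2 / 2)`, and the Chernoff bound with `l = t / ∑ (c i) ^ 2` concludes.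
-/

open MeasureTheory ProbabilityTheory Filter Real

lemma exp_mul_le_cosh_add_div_mul_sinh {x c : ℝ} (hx : |x| ≤ c) (l : ℝ) :
    exp (l * x) ≤ cosh (l * c) + x / c * sinh (l * c) := by
  rcases ((abs_nonneg x).trans hx).eq_or_lt with rfl | hc
  · simp [abs_nonpos_iff.1 hx]
  obtain ⟨hxl, hxu⟩ := abs_le.1 hx
  have ha : 0 ≤ (c - x) / (2 * c) := div_nonneg (by linarith) (by positivity)
  have hb : 0 ≤ (c + x) / (2 * c) := div_nonneg (by linarith) (by positivity)
  have hab : (c - x) / (2 * c) + (c + x) / (2 * c) = 1 := by field_simp; ring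
  have hconv := convexOn_exp.2 (Set.mem_univ (-(l * c))) (Set.mem_univ (l * c)) ha hb hab
  simp only [smul_eq_mul] at hconv
  have hpoint : (c - x) / (2 * c) * -(l * c) + (c + x) / (2 * c) * (l * c) = l * x := by
    field_simp; ring
  rw [hpoint] at hconv
  refine hconv.trans_eq ?_
  rw [cosh_eq, sinh_eq]
  field_simp
  ring

section Conditional

variable {Ω : Type*} {m m0 : MeasurableSpace Ω} {μ : Measure Ω} [IsFiniteMeasure μ]

lemma condExp_exp_mul_le_of_condExp_nonpos (hm : m ≤ m0) {D : Ω → ℝ} {c l : ℝ}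
    (hD : Integrable D μ) (hDc : ∀ ω, |D ω| ≤ c) (hD_cond : μ[D|m] ≤ᵐ[μ] 0) (hl : 0 ≤ l) :
    μ[fun ω ↦ exp (l * D ω)|m] ≤ᵐ[μ] fun _ ↦ exp (c ^ 2 * l ^ 2 / 2) := by
  set a := sinh (l * c) / c
  have hexp_int : Integrable (fun ω ↦ exp (l * D ω)) μ :=
    integrable_exp_mul_of_mem_Icc hD.aemeasurable (ae_of_all _ fun ω ↦ abs_le.1 (hDc ω))
  have hchord : μ[fun ω ↦ exp (l * D ω)|m] ≤ᵐ[μ] μ[fun ω ↦ cosh (l * c) + a * D ω|m] :=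
    condExp_mono hexp_int ((integrable_const _).add (hD.const_mul a)) (ae_of_all _ fun ω ↦
      (exp_mul_le_cosh_add_div_mul_sinh (hDc ω) l).trans_eq (by rw [div_mul_comm]))
  have hchord_cond : μ[fun ω ↦ cosh (l * c) + a * D ω|m] =ᵐ[μ]
      fun ω ↦ cosh (l * c) + a * (μ[D|m]) ω := by
    filter_upwards [condExp_add (m := m) (integrable_const (cosh (l * c))) (hD.smul a),
      condExp_smul (μ := μ) a D m] with ω h_add h_smul
    change μ[(fun _ ↦ cosh (l * c)) + a • D|m] ω = _
    rw [h_add, Pi.add_apply, condExp_const hm, h_smul]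
    rfl
  filter_upwards [hchord, hchord_cond, hD_cond] with ω h1 h2 h3
  have hc : 0 ≤ c := (abs_nonneg _).trans (hDc ω)
  have ha : 0 ≤ a := div_nonneg (sinh_nonneg_iff.2 (mul_nonneg hl hc)) hc
  calc (μ[fun ω ↦ exp (l * D ω)|m]) ω ≤ cosh (l * c) + a * (μ[D|m]) ω := h1.trans h2.le
    _ ≤ cosh (l * c) := by linarith [mul_nonpos_of_nonneg_of_nonpos ha h3]
    _ ≤ exp (c ^ 2 * l ^ 2 / 2) := (cosh_le_exp_half_sq _).trans_eq (by ring_nf)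

lemma integral_mul_le_of_condExp_le (hm : m ≤ m0) {f g : Ω → ℝ} {K : ℝ}
    (hf : AEStronglyMeasurable[m] f μ) (hf_nonneg : 0 ≤ᵐ[μ] f) (hf_int : Integrable f μ)
    (hg : Integrable g μ) (hfg : Integrable (f * g) μ) (hgK : μ[g|m] ≤ᵐ[μ] fun _ ↦ K) :
    ∫ ω, f ω * g ω ∂μ ≤ (∫ ω, f ω ∂μ) * K := by
  have hpull : μ[f * g|m] =ᵐ[μ] f * μ[g|m] := condExp_mul_of_aestronglyMeasurable_left hf hfg hg
  calc ∫ ω, f ω * g ω ∂μ = ∫ ω, (f * μ[g|m]) ω ∂μ :=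
        (integral_condExp hm).symm.trans (integral_congr_ae hpull)
    _ ≤ ∫ ω, f ω * K ∂μ := integral_mono_ae (integrable_condExp.congr hpull)
        (hf_int.mul_const K) (by
          filter_upwards [hgK, hf_nonneg] with ω h hf0
          exact mul_le_mul_of_nonneg_left h hf0)
    _ = (∫ ω, f ω ∂μ) * K := integral_mul_const K f

end Conditional

lemma measureReal_ge_le_exp_of_mgf_le {Ω : Type*} {m0 : MeasurableSpace Ω} {μ : Measure Ω}
    [IsProbabilityMeasure μ] {X : Ω → ℝ} {S ε : ℝ} (hε : 0 ≤ ε)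
    (h_int : ∀ t, 0 ≤ t → Integrable (fun ω ↦ exp (t * X ω)) μ)
    (h_mgf : ∀ t, 0 ≤ t → mgf X μ t ≤ exp (S * t ^ 2 / 2)) :
    μ.real {ω | ε ≤ X ω} ≤ exp (-ε ^ 2 / (2 * S)) := by
  rcases le_or_gt S 0 with hS | hS
  · exact measureReal_le_one.trans (one_le_exp (div_nonneg_of_nonpos (by nlinarith) (by linarith)))
  -- `t = ε / S` minimises `-t * ε + S * t ^ 2 / 2`
  have ht : 0 ≤ ε / S := div_nonneg hε hS.le
  calc μ.real {ω | ε ≤ X ω} ≤ exp (-(ε / S) * ε) * mgf X μ (ε / S) :=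
        measure_ge_le_exp_mul_mgf ε ht (h_int _ ht)
    _ ≤ exp (-(ε / S) * ε) * exp (S * (ε / S) ^ 2 / 2) := by gcongr; exact h_mgf _ ht
    _ = exp (-ε ^ 2 / (2 * S)) := by rw [← exp_add]; congr 1; field_simp; ring

lemma integrable_exp_mul_sub_zero {Ω : Type*} {m0 : MeasurableSpace Ω} {μ : Measure Ω}
    [IsFiniteMeasure μ] {Y : ℕ → Ω → ℝ} {c : ℕ → ℝ} (hY : ∀ n, AEMeasurable (Y n) μ)
    (hbdd : ∀ i ω, |Y (i + 1) ω - Y i ω| ≤ c i) (l : ℝ) (n : ℕ) :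
    Integrable (fun ω ↦ exp (l * (Y n ω - Y 0 ω))) μ := by
  refine integrable_exp_mul_of_mem_Icc (b := ∑ i ∈ Finset.range n, c i) ((hY n).sub (hY 0))
    (ae_of_all _ fun ω ↦ abs_le.1 ?_)
  rw [abs_sub_comm, ← Real.dist_eq]
  exact dist_le_range_sum_of_dist_le (f := fun k ↦ Y k ω) n fun _ ↦ by
    rw [Real.dist_eq, abs_sub_comm]; exact hbdd _ ω

namespace MeasureTheory.Supermartingale

variable {Ω ι : Type*} {m0 : MeasurableSpace Ω} {μ : Measure Ω}

theorem condExp_sub_nonpos [Preorder ι] {ℱ : Filtration ι m0} [SigmaFiniteFiltration μ ℱ]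
    {Y : ι → Ω → ℝ} (hY : Supermartingale Y ℱ μ) {i j : ι} (hij : i ≤ j) :
    μ[Y j - Y i|ℱ i] ≤ᵐ[μ] 0 := by
  filter_upwards [condExp_sub (hY.integrable j) (hY.integrable i) (ℱ i),
    hY.condExp_ae_le hij] with ω h_sub h_le
  rw [h_sub, Pi.sub_apply, condExp_of_stronglyMeasurable (ℱ.le i) (hY.stronglyAdapted i)
    (hY.integrable i)]
  exact sub_nonpos.2 h_le

variable [IsProbabilityMeasure μ] {ℱ : Filtration ℕ m0} {Y : ℕ → Ω → ℝ} {c : ℕ → ℝ}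

theorem mgf_sub_zero_le (hY : Supermartingale Y ℱ μ)
    (hbdd : ∀ i ω, |Y (i + 1) ω - Y i ω| ≤ c i) {l : ℝ} (hl : 0 ≤ l) (n : ℕ) :
    mgf (fun ω ↦ Y n ω - Y 0 ω) μ l ≤ exp ((∑ i ∈ Finset.range n, c i ^ 2) * l ^ 2 / 2) := by
  have hmeas n : AEMeasurable (Y n) μ := (hY.integrable n).aemeasurable
  induction n with
  | zero => simp
  | succ n ih =>
    set f := fun ω ↦ exp (l * (Y n ω - Y 0 ω))
    set g := fun ω ↦ exp (l * (Y (n + 1) ω - Y n ω))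
    have hfg : (fun ω ↦ exp (l * (Y (n + 1) ω - Y 0 ω))) = f * g := by
      ext ω; simp only [f, g, Pi.mul_apply, ← exp_add]; ring_nf
    have hf : StronglyMeasurable[ℱ n] f :=
      continuous_exp.comp_stronglyMeasurable (((hY.stronglyAdapted n).sub
        ((hY.stronglyAdapted 0).mono (ℱ.mono n.zero_le))).const_mul l)
    have hg : μ[g|ℱ n] ≤ᵐ[μ] fun _ ↦ exp (c n ^ 2 * l ^ 2 / 2) :=
      condExp_exp_mul_le_of_condExp_nonpos (ℱ.le n)
        ((hY.integrable (n + 1)).sub (hY.integrable n)) (hbdd n)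
        (hY.condExp_sub_nonpos n.le_succ) hl
    calc mgf (fun ω ↦ Y (n + 1) ω - Y 0 ω) μ l = ∫ ω, f ω * g ω ∂μ := by
          rw [mgf, hfg]; rfl
      _ ≤ (∫ ω, f ω ∂μ) * exp (c n ^ 2 * l ^ 2 / 2) :=
          integral_mul_le_of_condExp_le (ℱ.le n) hf.aestronglyMeasurable
            (ae_of_all _ fun _ ↦ (exp_pos _).le)
            (integrable_exp_mul_sub_zero hmeas hbdd l n)
            (integrable_exp_mul_of_mem_Icc ((hmeas (n + 1)).sub (hmeas n))
              (ae_of_all _ fun ω ↦ abs_le.1 (hbdd n ω)))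
            (hfg ▸ integrable_exp_mul_sub_zero hmeas hbdd l (n + 1)) hg
      _ ≤ exp ((∑ i ∈ Finset.range n, c i ^ 2) * l ^ 2 / 2) * exp (c n ^ 2 * l ^ 2 / 2) := by
          gcongr; exact ih
      _ = exp ((∑ i ∈ Finset.range (n + 1), c i ^ 2) * l ^ 2 / 2) := by
          rw [← exp_add, Finset.sum_range_succ]; ring_nf

end MeasureTheory.Supermartingale

theorem azuma_supermartingale_general
    {Ω : Type*} {m0 : MeasurableSpace Ω} {μ : Measure Ω} [IsProbabilityMeasure μ]
    (ℱ : Filtration ℕ m0) (Y : ℕ → Ω → ℝ)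
    (hY : Supermartingale Y ℱ μ)
    (c : ℕ → ℝ)
    (hbdd : ∀ i : ℕ, ∀ ω : Ω, |Y (i + 1) ω - Y i ω| ≤ c i) :
    ∀ n : ℕ, ∀ t : ℝ, 0 < t →
      (μ {ω | t ≤ Y n ω - Y 0 ω}).toReal ≤
        Real.exp (-t ^ 2 / (2 * ∑ i ∈ Finset.range n, (c i) ^ 2)) := by
  intro n t ht
  exact measureReal_ge_le_exp_of_mgf_le ht.le
    (fun l _ ↦ integrable_exp_mul_sub_zero (fun n ↦ (hY.integrable n).aemeasurable) hbdd l n)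
    (fun _ hl ↦ hY.mgf_sub_zero_le hbdd hl n)

/-- **Azuma's inequality for supermartingales.** If `Y` is a supermartingale
with respect to the filtration `ℱ` and has bounded differences `|Y (i+1) ω - Y i ω| ≤ c i`,
then for every `n` and `t > 0`, `P[Y n - Y 0 ≥ t] ≤ exp (-t² / (2 ∑_{i<n} (c i)²))`. -/
theorem azuma_supermartingale
    {Ω : Type*} {m0 : MeasurableSpace Ω} {μ : Measure Ω} [IsProbabilityMeasure μ]
    (ℱ : Filtration ℕ m0) (Y : ℕ → Ω → ℝ)
    (hY : Supermartingale Y ℱ μ)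
    (c : ℕ → ℝ) (hc : ∀ i, 0 < c i)
    (hbdd : ∀ i : ℕ, ∀ ω : Ω, |Y (i + 1) ω - Y i ω| ≤ c i) :
    ∀ n : ℕ, ∀ t : ℝ, 0 < t →
      (μ {ω | t ≤ Y n ω - Y 0 ω}).toReal ≤
        Real.exp (-t ^ 2 / (2 * ∑ i ∈ Finset.range n, (c i) ^ 2)) :=
  azuma_supermartingale_general ℱ Y hY c hbdd
end

section
/- Let f, π, V be Lipschitz continuous with constants L_f, L_π, L_V as above, X compact, X_s ⊆ X, and let X̃ ⊆ X \ X_s be a finite set such that every x ∈ X \ X_s has some x̃ ∈ X̃ with ‖x − x̃‖₁ ≤ τ. Set K = L_V·(L_f·(L_π + 1) + 1). If for every x̃ ∈ X̃ we have E_{ω∼d}[V(f(x̃, π(x̃), ω))] < V(x̃) − τ·K, then there exists ε > 0 such that for every x ∈ X \ X_s, E_{ω∼d}[V(f(x, π(x), ω))] ≤ V(x) − ε. -/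
/-!
Composing the Lipschitz bounds of `V`, `f` and `π`, moving from a net point `xt` to a point `x`
at distance at most `τ` raises the expected next value of `V` by at most
`LV·Lf·(Lπ+1)·τ` and lowers `V` itself by at most `LV·τ`, i.e. it costs at most `τ·K` in total.
The strict check at the finitely many net points leaves a uniform positive margin `ε`, which
therefore survives at every point of `X \ Xs`.
-/

open MeasureTheory

theorem Finset.exists_gt_forall_le {ι α : Type*} [LinearOrder α] [NoMaxOrder α] {a : α}
    (s : Finset ι) {g : ι → α} (hg : ∀ i ∈ s, a < g i) : ∃ b > a, ∀ i ∈ s, b ≤ g i := by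
  rcases s.eq_empty_or_nonempty with rfl | hs
  · obtain ⟨b, hb⟩ := exists_gt a
    exact ⟨b, hb, by simp⟩
  · exact ⟨s.inf' hs g, (s.lt_inf'_iff hs).2 hg, fun i hi => s.inf'_le g hi⟩

theorem MeasureTheory.integral_le_integral_add_of_ae_le_add {Ω : Type*} [MeasurableSpace Ω]
    {μ : Measure Ω} [IsProbabilityMeasure μ] {g h : Ω → ℝ} {c : ℝ}
    (hg : Integrable g μ) (hh : Integrable h μ) (hle : ∀ᵐ ω ∂μ, g ω ≤ h ω + c) :
    ∫ ω, g ω ∂μ ≤ ∫ ω, h ω ∂μ + c :=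
  calc ∫ ω, g ω ∂μ ≤ ∫ ω, (h ω + c) ∂μ := integral_mono_ae hg (hh.add (integrable_const c)) hle
    _ = ∫ ω, h ω ∂μ + c := by
      rw [integral_add hh (integrable_const c), integral_const, probReal_univ, one_smul]

section Feedback

variable {S U W : Type*} [NormedAddCommGroup S] [NormedAddCommGroup U]
  {f : S → U → W → S} {π : S → U} {V : S → ℝ} {Lf Lπ LV : ℝ}

theorem norm_feedback_sub_le (hLf : 0 ≤ Lf)
    (hf : ∀ x x' u u' w, ‖f x u w - f x' u' w‖ ≤ Lf * (‖x - x'‖ + ‖u - u'‖))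
    (hπ : ∀ x x', ‖π x - π x'‖ ≤ Lπ * ‖x - x'‖) (x y : S) (w : W) :
    ‖f x (π x) w - f y (π y) w‖ ≤ Lf * (Lπ + 1) * ‖x - y‖ :=
  calc ‖f x (π x) w - f y (π y) w‖ ≤ Lf * (‖x - y‖ + ‖π x - π y‖) := hf _ _ _ _ _
    _ ≤ Lf * (‖x - y‖ + Lπ * ‖x - y‖) := by gcongr; exact hπ x y
    _ = Lf * (Lπ + 1) * ‖x - y‖ := by ring

theorem integral_feedback_le [MeasurableSpace W] {d : Measure W} [IsProbabilityMeasure d]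
    (hLf : 0 ≤ Lf) (hLV : 0 ≤ LV)
    (hf : ∀ x x' u u' w, ‖f x u w - f x' u' w‖ ≤ Lf * (‖x - x'‖ + ‖u - u'‖))
    (hπ : ∀ x x', ‖π x - π x'‖ ≤ Lπ * ‖x - x'‖)
    (hV : ∀ x x', |V x - V x'| ≤ LV * ‖x - x'‖)
    (hint : ∀ x : S, Integrable (fun ω => V (f x (π x) ω)) d) (x y : S) :
    ∫ ω, V (f x (π x) ω) ∂d ≤ ∫ ω, V (f y (π y) ω) ∂d + LV * (Lf * (Lπ + 1)) * ‖x - y‖ := by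
  refine integral_le_integral_add_of_ae_le_add (hint x) (hint y) (ae_of_all _ fun ω => ?_)
  have hstep := mul_le_mul_of_nonneg_left (norm_feedback_sub_le hLf hf hπ x y ω) hLV
  linarith [le_of_abs_le (hV (f x (π x) ω) (f y (π y) ω))]

end Feedback

theorem discretized_check_implies_expected_decrease_general
    {S U W : Type*} [NormedAddCommGroup S] [NormedAddCommGroup U] [NormedAddCommGroup W]
    [MeasurableSpace W]
    (f : S → U → W → S) (π : S → U) (V : S → ℝ)
    (d : Measure W) [IsProbabilityMeasure d]
    (Xset Xs : Set S)
    (Xnet : Finset S)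
    (Lf Lπ LV τ : ℝ) (hLf : 0 ≤ Lf) (hLπ : 0 ≤ Lπ) (hLV : 0 ≤ LV)
    (hf : ∀ x x' u u' w w', ‖f x u w - f x' u' w'‖ ≤ Lf * (‖x - x'‖ + ‖u - u'‖ + ‖w - w'‖))
    (hπ : ∀ x x', ‖π x - π x'‖ ≤ Lπ * ‖x - x'‖)
    (hV : ∀ x x', |V x - V x'| ≤ LV * ‖x - x'‖)
    (hint : ∀ x : S, Integrable (fun ω => V (f x (π x) ω)) d)
    (hnet : ∀ x ∈ Xset \ Xs, ∃ xt ∈ Xnet, ‖x - xt‖ ≤ τ)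
    (K : ℝ) (hK : K = LV * (Lf * (Lπ + 1) + 1))
    (hcheck : ∀ xt ∈ Xnet, ∫ ω, V (f xt (π xt) ω) ∂d < V xt - τ * K) :
    ∃ ε > 0, ∀ x ∈ Xset \ Xs, ∫ ω, V (f x (π x) ω) ∂d ≤ V x - ε := by
  subst hK
  have hf_noise : ∀ x x' u u' w, ‖f x u w - f x' u' w‖ ≤ Lf * (‖x - x'‖ + ‖u - u'‖) :=
    fun x x' u u' w => by simpa using hf x x' u u' w w
  obtain ⟨ε, hε, hmargin⟩ := Xnet.exists_gt_forall_le
    (g := fun xt => V xt - τ * (LV * (Lf * (Lπ + 1) + 1)) - ∫ ω, V (f xt (π xt) ω) ∂d)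
    fun xt hxt => sub_pos.2 (hcheck xt hxt)
  refine ⟨ε, hε, fun x hx => ?_⟩
  obtain ⟨xt, hxt, hdist⟩ := hnet x hx
  have hdrift := integral_feedback_le (d := d) hLf hLV hf_noise hπ hV hint x xt
  have hVxt : V xt - V x ≤ LV * ‖x - xt‖ := norm_sub_rev x xt ▸ le_of_abs_le (hV xt x)
  have hcost : LV * (Lf * (Lπ + 1) + 1) * ‖x - xt‖ ≤ LV * (Lf * (Lπ + 1) + 1) * τ := by gcongr
  linarith [hmargin xt hxt]

/-- If the strict discretized expected-decrease condition
`E[V(f(xt,π(xt),ω))] < V xt - τ·K` with `K = LV·(Lf·(Lπ+1)+1)` holds at every point `xt` of a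
finite `τ`-net `Xnet` of `X \ Xs`, then there is `ε > 0` such that
`E[V(f(x,π(x),ω))] ≤ V x - ε` for every `x ∈ X \ Xs`. -/
theorem discretized_check_implies_expected_decrease
    {S U W : Type*} [NormedAddCommGroup S] [NormedAddCommGroup U] [NormedAddCommGroup W]
    [MeasurableSpace W]
    (f : S → U → W → S) (π : S → U) (V : S → ℝ)
    (d : Measure W) [IsProbabilityMeasure d]
    (Xset Xs : Set S) (hXcomp : IsCompact Xset)
    (Xnet : Finset S) (hXnetsub : (Xnet : Set S) ⊆ Xset \ Xs)
    (Lf Lπ LV τ : ℝ) (hLf : 0 ≤ Lf) (hLπ : 0 ≤ Lπ) (hLV : 0 ≤ LV) (hτ : 0 ≤ τ)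
    (hf : ∀ x x' u u' w w', ‖f x u w - f x' u' w'‖ ≤ Lf * (‖x - x'‖ + ‖u - u'‖ + ‖w - w'‖))
    (hπ : ∀ x x', ‖π x - π x'‖ ≤ Lπ * ‖x - x'‖)
    (hV : ∀ x x', |V x - V x'| ≤ LV * ‖x - x'‖)
    (hint : ∀ x : S, Integrable (fun ω => V (f x (π x) ω)) d)
    (hnet : ∀ x ∈ Xset \ Xs, ∃ xt ∈ Xnet, ‖x - xt‖ ≤ τ)
    (K : ℝ) (hK : K = LV * (Lf * (Lπ + 1) + 1))
    (hcheck : ∀ xt ∈ Xnet, ∫ ω, V (f xt (π xt) ω) ∂d < V xt - τ * K) :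
    ∃ ε > 0, ∀ x ∈ Xset \ Xs, ∫ ω, V (f x (π x) ω) ∂d ≤ V x - ε :=
  discretized_check_implies_expected_decrease_general f π V d Xset Xs Xnet Lf Lπ LV τ hLf hLπ hLV hf
    hπ hV hint hnet K hK hcheck
end
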